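/- Any single-hidden-layer ReLU network, restricted to a bounded domain D ⊂ ℝ^d with ‖x‖ ≤ X_B for all x ∈ D and X_B > 0, admits an equivalent form with unit weight vectors and thresholds bounded by X_B: for every natural number N, coefficients c : Fin N → ℝ, weight vectors w : Fin N → ℝ^d, and thresholds b : Fin N → ℝ, there exist a natural number M, coefficients ĉ : Fin M → ℝ, weight vectors ŵ : Fin M → ℝ^d with ‖ŵ_j‖ = 1 for every j, and thresholds b̂ : Fin M → ℝ with −X_B ≤ b̂_j ≤ X_B for every j, such that for all x ∈ D, ∑_{j=1}^{N} c_j · max(0, ⟨w_j, x⟩ + b_j) = ∑_{j=1}^{M} ĉ_j · max(0, ⟨ŵ_j, x⟩ + b̂_j). -/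

import Mathlib

open scoped RealInnerProductSpace
open Finset

/-!
On a domain inside the ball of radius `R`, every unit-direction pre-activation `s = ⟪u, x⟫` lies in `[-R, R]`.
Hence a ReLU neuron with unit weight and threshold `β` agrees there with the neuron whose
threshold is `β` clamped to `[-R, R]`, up to the constant `max 0 (β - R)`; and a constant is
itself a combination of two unit neurons, since `σ(s + R) + σ(-s + R) = 2R` for `|s| ≤ R`.
Rescaling `w` to `w / ‖w‖` reduces a general neuron to a unit one, so the restricted
neurons all lie in the span of the restricted unit neurons with thresholds in `[-R, R]`.
-/

section UnitReLU

variable {E : Type*} [NormedAddCommGroup E] [InnerProductSpace ℝ E]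

-- Neurons are taken as functions on `D`, so that agreement on `D` is equality in `D → ℝ`.
def reluNeuron (D : Set E) (w : E) (b : ℝ) : D → ℝ := fun x => max 0 (⟪w, (x : E)⟫ + b)

def unitReLUNeurons (D : Set E) (R : ℝ) : Set (D → ℝ) :=
  {f | ∃ w b, ‖w‖ = 1 ∧ b ∈ Set.Icc (-R) R ∧ f = reluNeuron D w b}

lemma max_zero_add_eq_of_mem_Icc {R s : ℝ} (β : ℝ) (hs : s ∈ Set.Icc (-R) R) :
    max 0 (s + β) = max 0 (s + max (-R) (min β R)) + max 0 (β - R) := by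
  obtain ⟨hs₁, hs₂⟩ := hs
  simp only [max_def, min_def]
  split_ifs <;> linarith

lemma inner_mem_Icc_of_norm_eq_one {u x : E} {R : ℝ} (hu : ‖u‖ = 1) (hx : ‖x‖ ≤ R) :
    ⟪u, x⟫ ∈ Set.Icc (-R) R := by
  have : |⟪u, x⟫| ≤ R := by
    calc |⟪u, x⟫| ≤ ‖u‖ * ‖x‖ := abs_real_inner_le_norm u x
      _ ≤ R := by rw [hu, one_mul]; exact hx
  exact abs_le.mp this

variable {D : Set E} {R : ℝ}

lemma const_mem_span_unitReLUNeurons [Nontrivial E] (hR : 0 < R) (hD : ∀ x ∈ D, ‖x‖ ≤ R)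
    (r : ℝ) : (fun _ => r : D → ℝ) ∈ Submodule.span ℝ (unitReLUNeurons D R) := by
  obtain ⟨e, he⟩ := exists_norm_eq E zero_le_one
  have hR' : R ∈ Set.Icc (-R) R := ⟨by linarith, le_rfl⟩
  have hsum : (fun _ => r : D → ℝ) =
      (r / (2 * R)) • (reluNeuron D e R + reluNeuron D (-e) R) := by
    funext x
    obtain ⟨h₁, h₂⟩ := inner_mem_Icc_of_norm_eq_one he (hD x x.2)
    simp only [reluNeuron, Pi.smul_apply, Pi.add_apply, smul_eq_mul, inner_neg_left]
    rw [max_eq_right (by linarith), max_eq_right (by linarith)]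
    field_simp
    ring
  rw [hsum]
  exact Submodule.smul_mem _ _ (Submodule.add_mem _
    (Submodule.subset_span ⟨e, R, he, hR', rfl⟩)
    (Submodule.subset_span ⟨-e, R, by rwa [norm_neg], hR', rfl⟩))

lemma reluNeuron_mem_span_of_norm_eq_one [Nontrivial E] (hR : 0 < R)
    (hD : ∀ x ∈ D, ‖x‖ ≤ R) {u : E} (hu : ‖u‖ = 1) (β : ℝ) :
    reluNeuron D u β ∈ Submodule.span ℝ (unitReLUNeurons D R) := by
  have hclamp : max (-R) (min β R) ∈ Set.Icc (-R) R :=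
    ⟨le_max_left _ _, max_le (by linarith) (min_le_right _ _)⟩
  have hsplit : reluNeuron D u β =
      reluNeuron D u (max (-R) (min β R)) + fun _ => max 0 (β - R) := by
    funext x
    exact max_zero_add_eq_of_mem_Icc β (inner_mem_Icc_of_norm_eq_one hu (hD x x.2))
  rw [hsplit]
  exact Submodule.add_mem _ (Submodule.subset_span ⟨u, _, hu, hclamp, rfl⟩)
    (const_mem_span_unitReLUNeurons hR hD _)

lemma reluNeuron_mem_span [Nontrivial E] (hR : 0 < R) (hD : ∀ x ∈ D, ‖x‖ ≤ R) (w : E)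
    (b : ℝ) : reluNeuron D w b ∈ Submodule.span ℝ (unitReLUNeurons D R) := by
  rcases eq_or_ne w 0 with rfl | hw
  · convert const_mem_span_unitReLUNeurons hR hD (max 0 b) using 1
    funext x
    simp [reluNeuron]
  have hw' : 0 < ‖w‖ := norm_pos_iff.mpr hw
  have hscale : reluNeuron D w b = ‖w‖ • reluNeuron D (‖w‖⁻¹ • w) (b / ‖w‖) := by
    funext x
    simp only [reluNeuron, Pi.smul_apply, smul_eq_mul, real_inner_smul_left]
    rw [mul_max_of_nonneg _ _ hw'.le, mul_zero]
    field_simp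
  rw [hscale]
  exact Submodule.smul_mem _ _
    (reluNeuron_mem_span_of_norm_eq_one hR hD (norm_smul_inv_norm hw) _)

lemma exists_unitReLU_network_of_mem_span {f : D → ℝ}
    (hf : f ∈ Submodule.span ℝ (unitReLUNeurons D R)) :
    ∃ (M : ℕ) (c : Fin M → ℝ) (w : Fin M → E) (b : Fin M → ℝ),
      (∀ j, ‖w j‖ = 1) ∧ (∀ j, b j ∈ Set.Icc (-R) R) ∧
      ∀ x : D, f x = ∑ j, c j * max 0 (⟪w j, (x : E)⟫ + b j) := by
  obtain ⟨M, c, g, rfl⟩ := Submodule.mem_span_set'.mp hf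
  choose w b hw hb hg using fun j => (g j).2
  refine ⟨M, c, w, b, hw, hb, fun x => ?_⟩
  simp only [Finset.sum_apply, Pi.smul_apply, smul_eq_mul, hg, reluNeuron]

end UnitReLU

/-- Any single-hidden-layer ReLU network, restricted to a bounded domain
`D ⊆ ℝ^d` with `‖x‖ ≤ X_B` on `D`, admits an equivalent form with unit
weight vectors and thresholds bounded by `X_B`. -/
theorem relu_network_unit_weights_bounded_thresholds (d : ℕ) (hd : 1 ≤ d)
    (D : Set (EuclideanSpace ℝ (Fin d))) (XB : ℝ) (hXB : 0 < XB)
    (hD : ∀ x ∈ D, ‖x‖ ≤ XB) (N : ℕ)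
    (c : Fin N → ℝ) (w : Fin N → EuclideanSpace ℝ (Fin d)) (b : Fin N → ℝ) :
    ∃ (M : ℕ) (c' : Fin M → ℝ) (w' : Fin M → EuclideanSpace ℝ (Fin d))
      (b' : Fin M → ℝ),
      (∀ j, ‖w' j‖ = 1) ∧
      (∀ j, -XB ≤ b' j ∧ b' j ≤ XB) ∧
      ∀ x ∈ D,
        ∑ j, c j * max 0 (⟪w j, x⟫ + b j)
          = ∑ j, c' j * max 0 (⟪w' j, x⟫ + b' j) := by
  have : Nonempty (Fin d) := ⟨⟨0, hd⟩⟩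
  have hnet :
      ∑ j, c j • reluNeuron D (w j) (b j) ∈ Submodule.span ℝ (unitReLUNeurons D XB) :=
    Submodule.sum_mem _ fun j _ => Submodule.smul_mem _ _ (reluNeuron_mem_span hXB hD _ _)
  obtain ⟨M, c', w', b', hw', hb', heq⟩ := exists_unitReLU_network_of_mem_span hnet
  refine ⟨M, c', w', b', hw', hb', fun x hx => ?_⟩
  simpa [reluNeuron] using heq ⟨x, hx⟩
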